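/- If ∇ is a Cartan connection on L, then the operation ∇̄_X V := ρ(∇_V X) + ⁅ρ(X), V⁆ on Der_R(A) is flat: ∇̄_X(∇̄_Y V) − ∇̄_Y(∇̄_X V) − ∇̄_{⁅X,Y⁆} V = 0 for all X, Y ∈ L and V ∈ Der_R(A). (Necessity, asserted in Section 2.3 and in Proposition 5.3, that the induced 𝔤-connection on TM is a representation.) -/
import Mathlib


variable {R A L : Type*} [CommRing R] [CommRing A] [Algebra R A]
  [LieRing L] [LieAlgebra R L] [Module A L]
  [IsScalarTower R A L] [SMulCommClass R A L] [SMulCommClass A R L]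

/-- The induced `𝔤`-connection on derivations: `∇̄_X V := ρ(∇_V X) + ⁅ρ(X), V⁆`. -/
def barDer (ρ : L →ₗ[A] Derivation R A A) (D : Derivation R A A → L → L)
    (X : L) (V : Derivation R A A) : Derivation R A A :=
  ρ (D V X) + ⁅ρ X, V⁆

/-- The induced `𝔤`-connection of `L` on itself: `∇̄_X Y := ∇_{ρ(Y)} X + ⁅X, Y⁆`. -/
def barSelf (ρ : L →ₗ[A] Derivation R A A) (D : Derivation R A A → L → L)
    (X Y : L) : L :=
  D (ρ Y) X + ⁅X, Y⁆

/-- `D` is a connection on `L`: additive in both arguments, `A`-linear in the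
derivation argument, and satisfying the Leibniz rule. -/
def IsConnection (D : Derivation R A A → L → L) : Prop :=
  (∀ (V W : Derivation R A A) (X : L), D (V + W) X = D V X + D W X) ∧
  (∀ (V : Derivation R A A) (X Y : L), D V (X + Y) = D V X + D V Y) ∧
  (∀ (a : A) (V : Derivation R A A) (X : L), D (a • V) X = a • D V X) ∧
  (∀ (V : Derivation R A A) (a : A) (X : L), D V (a • X) = a • D V X + V a • X)

/-- `D` is a Cartan connection: it is compatible with the bracket of `L`. -/
def IsCartanConnection (ρ : L →ₗ[A] Derivation R A A)
    (D : Derivation R A A → L → L) : Prop :=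
  ∀ (V : Derivation R A A) (X Y : L),
    D V ⁅X, Y⁆ = ⁅D V X, Y⁆ + ⁅X, D V Y⁆
      + D (barDer ρ D Y V) X - D (barDer ρ D X V) Y

/-- If `∇` is a Cartan connection on `L`, then the operation
`∇̄_X V := ρ(∇_V X) + ⁅ρ(X), V⁆` on `Der_R(A)` is flat. -/
theorem barDer_is_flat
(ρ : L →ₗ[A] Derivation R A A)
    (hanchor : ∀ X Y : L, ρ ⁅X, Y⁆ = ⁅ρ X, ρ Y⁆)
    (hleib : ∀ (X : L) (a : A) (Y : L), ⁅X, a • Y⁆ = a • ⁅X, Y⁆ + ρ X a • Y)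
    (D : Derivation R A A → L → L) (hD : IsConnection D)
    (hC : IsCartanConnection ρ D) :
    ∀ (X Y : L) (V : Derivation R A A),
      barDer ρ D X (barDer ρ D Y V) - barDer ρ D Y (barDer ρ D X V)
        - barDer ρ D ⁅X, Y⁆ V = 0 := by
  intro X Y V
  simp only [barDer, hC V X Y, map_add, map_sub, hanchor, lie_add, add_lie, lie_lie]
  rw [← lie_skew (ρ Y) (ρ (D V X))]
  abel
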